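/- arXiv:2111.00529 — 2 statements merged into one kernel-verified Lean document; each statement's English description precedes it below -/
import Mathlib

section
/- Let p ≥ 3 and f ∈ H(L,α,β) with p(α+β) ≥ 1. Let (Y_k) be a Bernoulli-shift process with coupled versions Y_k^*, and suppose ‖Y_0‖_{p(α+β)} + Σ_{k∈ℕ} k² ‖Y_k − Y_k^*‖_{p(α+β)}^β < ∞. Then X_k = f(Y_k) − E f(Y_k) satisfies condition (A2): Σ_{k≥0} k² ϑ*_k(p) < ∞. -/
/-!
By stationarity of the Bernoulli shift, `ϑ*_l(p) = ‖f(Y_l) − f(Y_l^{(l,*)})‖_p`, and both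
`Y_l` and its coupled version `Y_l^{(l,*)}` have the law of `Y_0`. With `q = p(α+β)`, the
Hölder-class bound and Hölder's inequality for the exponents `q/β` and `q/α`
(`1/p = β/q + α/q`) give
`ϑ*_l(p) ≤ L ‖Y_l − Y_l^{(l,*)}‖_q^β (1 + 2‖Y_0‖_q^α)`,
so the weighted series `Σ l² ϑ*_l(p)` is dominated by a multiple of the assumed finite one.
-/

open MeasureTheory ProbabilityTheory Filter
open scoped ENNReal NNReal Topology

noncomputable section

/-- The Bernoulli-shift process `X_k = g(ε_k, ε_{k-1}, …)`. -/
def shift {Ω : Type*} (g : (ℕ → ℝ) → ℝ) (ε : ℤ → Ω → ℝ) (k : ℤ) (ω : Ω) : ℝ :=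
  g fun i => ε (k - i) ω

/-- The coupled version `X_k^{(l,*)} = g(ε_k, …, ε_{k-l+1}, ε'_{k-l}, ε'_{k-l-1}, …)`:
coordinates `i ≥ l` are replaced by the independent copy `ε'`. -/
def shiftStar {Ω : Type*} (g : (ℕ → ℝ) → ℝ) (ε ε' : ℤ → Ω → ℝ) (l : ℕ) (k : ℤ) (ω : Ω) : ℝ :=
  g fun i => if i < l then ε (k - i) ω else ε' (k - i) ω

/-- `(ε_k)` together with the copy `(ε'_k)`: all coordinates are mutually independent and
identically distributed (so `(ε_k)` is i.i.d. and `(ε'_k)` is an independent copy). -/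
def IIDPair {Ω : Type*} [MeasurableSpace Ω] (μ : Measure Ω) (ε ε' : ℤ → Ω → ℝ) : Prop :=
  (∀ k, Measurable (ε k)) ∧ (∀ k, Measurable (ε' k)) ∧
    iIndepFun (Sum.elim ε ε') μ ∧
    ∀ j j' : ℤ ⊕ ℤ, IdentDistrib (Sum.elim ε ε' j) (Sum.elim ε ε' j') μ μ

/-- The dependence measure `ϑ*_l(p) = sup_k ‖X_k − X_k^{(l,*)}‖_p`. -/
def theta {Ω : Type*} [MeasurableSpace Ω] (μ : Measure Ω) (g : (ℕ → ℝ) → ℝ)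
    (ε ε' : ℤ → Ω → ℝ) (p : ℝ) (l : ℕ) : ℝ≥0∞ :=
  ⨆ k : ℤ, eLpNorm (fun ω => shift g ε k ω - shiftStar g ε ε' l k ω) (ENNReal.ofReal p) μ

/-- The generalised Hölder class `H(L, α, β)`:
`|f(x) − f(y)| ≤ L |x−y|^β (1 + |x|^α + |y|^α)`. -/
def HolderClass (f : ℝ → ℝ) (L α β : ℝ) : Prop :=
  0 ≤ α ∧ 0 < β ∧ 0 < L ∧
    ∀ x y : ℝ, |f x - f y| ≤ L * |x - y| ^ β * (1 + |x| ^ α + |y| ^ α)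

section IID

variable {Ω J ι E γ : Type*} [MeasurableSpace Ω] {μ : Measure Ω} [MeasurableSpace E]
  {Z : J → Ω → E} {j₀ : J}

lemma ProbabilityTheory.iIndepFun.map_comp_injective_eq_infinitePi (hZ : ∀ j, Measurable (Z j))
    (hind : iIndepFun Z μ) (hid : ∀ j, IdentDistrib (Z j) (Z j₀) μ μ) {σ : ι → J}
    (hσ : σ.Injective) :
    μ.map (fun ω i => Z (σ i) ω) = Measure.infinitePi fun _ => μ.map (Z j₀) := by
  rw [(hind.precomp hσ).map_fun_eq_infinitePi_map fun i => hZ (σ i)]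
  simp only [(hid _).map_eq]

lemma ProbabilityTheory.iIndepFun.identDistrib_comp_injective [IsProbabilityMeasure μ]
    [MeasurableSpace γ] (hZ : ∀ j, Measurable (Z j))
    (hind : iIndepFun Z μ) (hid : ∀ j, IdentDistrib (Z j) (Z j₀) μ μ) {σ τ : ι → J}
    (hσ : σ.Injective) (hτ : τ.Injective) {F : (ι → E) → γ} (hF : Measurable F) :
    IdentDistrib (fun ω => F fun i => Z (σ i) ω) (fun ω => F fun i => Z (τ i) ω) μ μ := by
  refine IdentDistrib.comp ⟨?_, ?_, ?_⟩ hF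
  · exact (measurable_pi_lambda _ fun i => hZ (σ i)).aemeasurable
  · exact (measurable_pi_lambda _ fun i => hZ (τ i)).aemeasurable
  · rw [hind.map_comp_injective_eq_infinitePi hZ hid hσ,
      hind.map_comp_injective_eq_infinitePi hZ hid hτ]

end IID

lemma sub_natCast_injective (k : ℤ) : Function.Injective fun i : ℕ => k - (i : ℤ) :=
  sub_right_injective.comp Nat.cast_injective

lemma theta_sub_const {Ω : Type*} [MeasurableSpace Ω] (μ : Measure Ω) (g : (ℕ → ℝ) → ℝ)
    (c : ℝ) (ε ε' : ℤ → Ω → ℝ) (p : ℝ) (l : ℕ) :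
    theta μ (fun u => g u - c) ε ε' p l = theta μ g ε ε' p l := by
  simp only [theta, shift, shiftStar, sub_sub_sub_cancel_right]

namespace IIDPair

variable {Ω : Type*} [MeasurableSpace Ω] {μ : Measure Ω} [IsProbabilityMeasure μ]
  {ε ε' : ℤ → Ω → ℝ} {g : (ℕ → ℝ) → ℝ}

lemma identDistrib_comp (h : IIDPair μ ε ε') {ι : Type*} {σ τ : ι → ℤ ⊕ ℤ}
    (hσ : σ.Injective) (hτ : τ.Injective) {F : (ι → ℝ) → ℝ} (hF : Measurable F) :
    IdentDistrib (fun ω => F fun i => Sum.elim ε ε' (σ i) ω)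
      (fun ω => F fun i => Sum.elim ε ε' (τ i) ω) μ μ := by
  obtain ⟨hε, hε', hind, hid⟩ := h
  exact hind.identDistrib_comp_injective (Sum.rec hε hε') (fun j => hid j (.inl 0)) hσ hτ hF

lemma identDistrib_shift (h : IIDPair μ ε ε') (hg : Measurable g) (k k' : ℤ) :
    IdentDistrib (shift g ε k) (shift g ε k') μ μ :=
  h.identDistrib_comp (σ := fun i : ℕ => .inl (k - i)) (τ := fun i : ℕ => .inl (k' - i))
    (Sum.inl_injective.comp (sub_natCast_injective k))
    (Sum.inl_injective.comp (sub_natCast_injective k')) hg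

lemma identDistrib_shiftStar_shift (h : IIDPair μ ε ε') (hg : Measurable g) (l : ℕ)
    (k k' : ℤ) : IdentDistrib (shiftStar g ε ε' l k) (shift g ε k') μ μ := by
  have hσ : Function.Injective fun i : ℕ =>
      if i < l then Sum.inl (k - i) else (Sum.inr (k - i) : ℤ ⊕ ℤ) := by
    intro a b hab
    dsimp only at hab
    split_ifs at hab <;> simp only [Sum.inl.injEq, Sum.inr.injEq] at hab <;> omega
  have hstar : shiftStar g ε ε' l k = fun ω => g fun i =>
      Sum.elim ε ε' (if i < l then Sum.inl (k - i) else Sum.inr (k - i)) ω := by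
    funext ω
    simp only [shiftStar, apply_ite (Sum.elim ε ε' · ω), Sum.elim_inl, Sum.elim_inr]
  rw [hstar]
  exact h.identDistrib_comp hσ (Sum.inl_injective.comp (sub_natCast_injective k')) hg

lemma identDistrib_shift_sub_shiftStar (h : IIDPair μ ε ε') (hg : Measurable g) (l : ℕ)
    (k k' : ℤ) :
    IdentDistrib (fun ω => shift g ε k ω - shiftStar g ε ε' l k ω)
      (fun ω => shift g ε k' ω - shiftStar g ε ε' l k' ω) μ μ := by
  have hσ (k : ℤ) : Function.Injective (Sum.map (fun i : ℕ => k - i) (fun i : ℕ => k - i)) :=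
    (sub_natCast_injective k).sumMap (sub_natCast_injective k)
  refine h.identDistrib_comp (hσ k) (hσ k')
    (F := fun u => g (fun i => u (.inl i)) - g fun i => if i < l then u (.inl i) else u (.inr i))
    ?_
  refine (hg.comp (measurable_pi_lambda _ fun i => measurable_pi_apply _)).sub
    (hg.comp (measurable_pi_lambda _ fun i => ?_))
  split_ifs <;> exact measurable_pi_apply _

lemma theta_eq (h : IIDPair μ ε ε') (hg : Measurable g) (p : ℝ) (l : ℕ) :
    theta μ g ε ε' p l =
      eLpNorm (fun ω => shift g ε l ω - shiftStar g ε ε' l l ω) (ENNReal.ofReal p) μ := by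
  simp only [theta, (h.identDistrib_shift_sub_shiftStar hg l _ l).eLpNorm_eq, iSup_const]

end IIDPair

section HolderEstimate

lemma HolderClass.continuous {f : ℝ → ℝ} {L α β : ℝ} (hf : HolderClass f L α β) :
    Continuous f := by
  obtain ⟨hα, hβ, -, hbound⟩ := hf
  have hβ0 := hβ.le
  refine continuous_iff_continuousAt.2 fun y => tendsto_iff_norm_sub_tendsto_zero.2 ?_
  have hcont : Continuous fun x => L * |x - y| ^ β * (1 + |x| ^ α + |y| ^ α) := by
    fun_prop (disch := assumption)
  have hzero : L * |y - y| ^ β * (1 + |y| ^ α + |y| ^ α) = 0 := by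
    simp [Real.zero_rpow hβ.ne']
  refine squeeze_zero (fun x => norm_nonneg _)
    (fun x => (Real.norm_eq_abs _).trans_le (hbound x y)) ?_
  simpa only [hzero] using hcont.tendsto y

variable {Ω : Type*} [MeasurableSpace Ω] {μ : Measure Ω}

-- For `α = 0` the exponent is `s / 0 = ⊤` in `ℝ≥0∞`, and both sides are `1`.
lemma eLpNorm_abs_rpow_div_ofReal [IsProbabilityMeasure μ] (X : Ω → ℝ) {α : ℝ} (hα : 0 ≤ α)
    {s : ℝ≥0∞} (hs : s ≠ 0) :
    eLpNorm (fun ω => |X ω| ^ α) (s / ENNReal.ofReal α) μ = eLpNorm X s μ ^ α := by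
  rcases hα.eq_or_lt with rfl | hα
  · simp only [Real.rpow_zero, ENNReal.ofReal_zero, ENNReal.div_zero hs, ENNReal.rpow_zero]
    simp [eLpNorm_const _ ENNReal.top_ne_zero (IsProbabilityMeasure.ne_zero μ)]
  · simp only [← Real.norm_eq_abs]
    rw [eLpNorm_norm_rpow X hα,
      ENNReal.div_mul_cancel (by simpa using hα) ENNReal.ofReal_ne_top]

lemma eLpNorm_one_add_add_le [IsProbabilityMeasure μ] {U V : Ω → ℝ}
    (hU : AEStronglyMeasurable U μ) (hV : AEStronglyMeasurable V μ) {r : ℝ≥0∞} (hr : 1 ≤ r) :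
    eLpNorm (fun ω => 1 + U ω + V ω) r μ ≤ 1 + eLpNorm U r μ + eLpNorm V r μ := by
  have hone : eLpNorm (fun _ => (1 : ℝ)) r μ = 1 := by
    simp [eLpNorm_const _ (zero_lt_one.trans_le hr).ne' (IsProbabilityMeasure.ne_zero μ)]
  calc eLpNorm (fun ω => 1 + U ω + V ω) r μ
      ≤ eLpNorm (fun ω => 1 + U ω) r μ + eLpNorm V r μ :=
        eLpNorm_add_le (aestronglyMeasurable_const.add hU) hV hr
    _ ≤ 1 + eLpNorm U r μ + eLpNorm V r μ := by
        gcongr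
        exact hone ▸ eLpNorm_add_le aestronglyMeasurable_const hU hr

lemma holderTriple_mul_add_div {p a b : ℝ≥0∞} (hp : p ≠ 0) (hab : a + b ≠ 0)
    (ha : a ≠ ⊤) (hb : b ≠ ⊤) :
    ENNReal.HolderTriple (p * (a + b) / b) (p * (a + b) / a) p := by
  have hq : p * (a + b) ≠ 0 := mul_ne_zero hp hab
  constructor
  rw [ENNReal.inv_div (.inl hb) (.inr hq), ENNReal.inv_div (.inl ha) (.inr hq),
    ENNReal.div_add_div_same, add_comm b, ← one_div,
    ← ENNReal.mul_div_mul_right 1 p hab (ENNReal.add_ne_top.2 ⟨ha, hb⟩), one_mul]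

theorem HolderClass.eLpNorm_comp_sub_comp_le {f : ℝ → ℝ} {L α β : ℝ}
    (hf : HolderClass f L α β) [IsProbabilityMeasure μ] {X Y : Ω → ℝ}
    (hX : AEMeasurable X μ) (hY : AEMeasurable Y μ) {p : ℝ≥0∞} (hp : 1 ≤ p) :
    eLpNorm (fun ω => f (X ω) - f (Y ω)) p μ ≤
      ‖L‖ₑ * eLpNorm (fun ω => X ω - Y ω) (p * (ENNReal.ofReal α + ENNReal.ofReal β)) μ ^ β *
        (1 + eLpNorm X (p * (ENNReal.ofReal α + ENNReal.ofReal β)) μ ^ α +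
          eLpNorm Y (p * (ENNReal.ofReal α + ENNReal.ofReal β)) μ ^ α) := by
  obtain ⟨hα, hβ, -, hbound⟩ := hf
  have hβ0 := hβ.le
  set q := p * (ENNReal.ofReal α + ENNReal.ofReal β)
  have hp0 : p ≠ 0 := (zero_lt_one.trans_le hp).ne'
  have hαβ : ENNReal.ofReal α + ENNReal.ofReal β ≠ 0 := by simp [hβ]
  have hq0 : q ≠ 0 := mul_ne_zero hp0 hαβ
  have := holderTriple_mul_add_div hp0 hαβ ENNReal.ofReal_ne_top ENNReal.ofReal_ne_top
  have hdiff : AEStronglyMeasurable (fun ω => |X ω - Y ω| ^ β) μ := by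
    fun_prop (disch := assumption)
  have hX' : AEStronglyMeasurable (fun ω => |X ω| ^ α) μ := by fun_prop (disch := assumption)
  have hY' : AEStronglyMeasurable (fun ω => |Y ω| ^ α) μ := by fun_prop (disch := assumption)
  have hr : 1 ≤ q / ENNReal.ofReal α := by
    rw [ENNReal.le_div_iff_mul_le (.inr hq0) (.inl ENNReal.ofReal_ne_top), one_mul]
    exact le_self_add.trans (le_mul_of_one_le_left' hp)
  calc eLpNorm (fun ω => f (X ω) - f (Y ω)) p μ
      ≤ eLpNorm (L • (fun ω => |X ω - Y ω| ^ β) • fun ω => 1 + |X ω| ^ α + |Y ω| ^ α) p μ := by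
        refine eLpNorm_mono_real fun ω => ?_
        simpa only [Real.norm_eq_abs, Pi.smul_apply, Pi.mul_apply, smul_eq_mul, mul_assoc]
          using hbound (X ω) (Y ω)
    _ ≤ ‖L‖ₑ * (eLpNorm (fun ω => |X ω - Y ω| ^ β) (q / ENNReal.ofReal β) μ *
          eLpNorm (fun ω => 1 + |X ω| ^ α + |Y ω| ^ α) (q / ENNReal.ofReal α) μ) := by
        rw [eLpNorm_const_smul]
        exact mul_le_mul_right (eLpNorm_smul_le_mul_eLpNorm
          ((aestronglyMeasurable_const.add hX').add hY') hdiff) _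
    _ ≤ _ := by
        rw [eLpNorm_abs_rpow_div_ofReal _ hβ0 hq0, mul_assoc]
        refine mul_le_mul_right (mul_le_mul_right ?_ _) _
        refine (eLpNorm_one_add_add_le hX' hY' hr).trans_eq ?_
        rw [eLpNorm_abs_rpow_div_ofReal _ hα hq0, eLpNorm_abs_rpow_div_ofReal _ hα hq0]

end HolderEstimate

theorem holder_transform_satisfies_A2_general
    {Ω : Type*} [MeasurableSpace Ω] (μ : Measure Ω) [IsProbabilityMeasure μ]
    (gY : (ℕ → ℝ) → ℝ) (hgY : Measurable gY) (ε ε' : ℤ → Ω → ℝ)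
    (hiid : IIDPair μ ε ε') (p L α β : ℝ) (hp : 3 ≤ p)
    (f : ℝ → ℝ) (hf : HolderClass f L α β)
    (hY0 : eLpNorm (shift gY ε 0) (ENNReal.ofReal (p * (α + β))) μ < ⊤)
    (hYsum : (∑' k : ℕ, (k : ℝ≥0∞) ^ 2 *
        (eLpNorm (fun ω => shift gY ε k ω - shiftStar gY ε ε' k k ω)
          (ENNReal.ofReal (p * (α + β))) μ) ^ β) < ⊤) :
    (∑' l : ℕ, (l : ℝ≥0∞) ^ 2 *
        theta μ (fun u => f (gY u) - ∫ ω, f (shift gY ε 0 ω) ∂μ) ε ε' p l) < ⊤ := by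
  set q := ENNReal.ofReal (p * (α + β)) with hq_def
  have hq : q = ENNReal.ofReal p * (ENNReal.ofReal α + ENNReal.ofReal β) := by
    rw [hq_def, ENNReal.ofReal_mul (by linarith), ENNReal.ofReal_add hf.1 hf.2.1.le]
  set C := ‖L‖ₑ * (1 + eLpNorm (shift gY ε 0) q μ ^ α + eLpNorm (shift gY ε 0) q μ ^ α)
  have hC : C ≠ ⊤ := by
    have := ENNReal.rpow_ne_top_of_nonneg hf.1 hY0.ne
    finiteness
  have key (l : ℕ) :
      theta μ (fun u => f (gY u) - ∫ ω, f (shift gY ε 0 ω) ∂μ) ε ε' p l ≤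
        C * eLpNorm (fun ω => shift gY ε l ω - shiftStar gY ε ε' l l ω) q μ ^ β := by
    have hY := hiid.identDistrib_shift hgY l 0
    have hY' := hiid.identDistrib_shiftStar_shift hgY l l 0
    calc theta μ (fun u => f (gY u) - ∫ ω, f (shift gY ε 0 ω) ∂μ) ε ε' p l
        = eLpNorm (fun ω => f (shift gY ε l ω) - f (shiftStar gY ε ε' l l ω))
            (ENNReal.ofReal p) μ := by
          rw [theta_sub_const]
          exact hiid.theta_eq (hf.continuous.measurable.comp hgY) p l
      _ ≤ _ := hf.eLpNorm_comp_sub_comp_le hY.aemeasurable_fst hY'.aemeasurable_fst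
          (ENNReal.one_le_ofReal.2 (by linarith))
      _ = _ := by
          rw [← hq, hY.eLpNorm_eq, hY'.eLpNorm_eq]
          ring
  calc ∑' l : ℕ, (l : ℝ≥0∞) ^ 2 *
        theta μ (fun u => f (gY u) - ∫ ω, f (shift gY ε 0 ω) ∂μ) ε ε' p l
      ≤ ∑' l : ℕ, (l : ℝ≥0∞) ^ 2 *
          (C * eLpNorm (fun ω => shift gY ε l ω - shiftStar gY ε ε' l l ω) q μ ^ β) :=
        ENNReal.tsum_le_tsum fun l => mul_le_mul_right (key l) _
    _ = C * ∑' l : ℕ, (l : ℝ≥0∞) ^ 2 *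
          eLpNorm (fun ω => shift gY ε l ω - shiftStar gY ε ε' l l ω) q μ ^ β := by
        rw [← ENNReal.tsum_mul_left]
        exact tsum_congr fun l => by ring
    _ < ⊤ := ENNReal.mul_lt_top hC.lt_top hYsum

/-- Lemma `lem:hoelder`: if `f ∈ H(L,α,β)`, `p(α+β) ≥ 1`, and
`‖Y_0‖_{p(α+β)} + Σ_k k² ‖Y_k − Y_k^*‖_{p(α+β)}^β < ∞`, then `X_k = f(Y_k) − E f(Y_k)`
satisfies (A2): `Σ_k k² ϑ*_k(p) < ∞`. -/
theorem holder_transform_satisfies_A2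
    {Ω : Type*} [MeasurableSpace Ω] (μ : Measure Ω) [IsProbabilityMeasure μ]
    (gY : (ℕ → ℝ) → ℝ) (hgY : Measurable gY) (ε ε' : ℤ → Ω → ℝ)
    (hiid : IIDPair μ ε ε') (p L α β : ℝ) (hp : 3 ≤ p)
    (f : ℝ → ℝ) (hf : HolderClass f L α β) (hpab : 1 ≤ p * (α + β))
    (hY0 : eLpNorm (shift gY ε 0) (ENNReal.ofReal (p * (α + β))) μ < ⊤)
    (hYsum : (∑' k : ℕ, (k : ℝ≥0∞) ^ 2 *
        (eLpNorm (fun ω => shift gY ε k ω - shiftStar gY ε ε' k k ω)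
          (ENNReal.ofReal (p * (α + β))) μ) ^ β) < ⊤) :
    (∑' l : ℕ, (l : ℝ≥0∞) ^ 2 *
        theta μ (fun u => f (gY u) - ∫ ω, f (shift gY ε 0 ω) ∂μ) ε ε' p l) < ⊤ :=
  holder_transform_satisfies_A2_general μ gY hgY ε ε' hiid p L α β hp f hf hY0 hYsum

end
end

section
/- Let V_k = Σ_{i=1}^∞ Σ_{0≤j_1<…<j_i} a(j_1,…,j_i) ε_{k−j_1} ⋯ ε_{k−j_i} be a Volterra process with i.i.d. innovations (ε_k) satisfying ‖ε_0‖_p < ∞ for some p > 3, and let V_k^* denote the coupled version in which ε_j is replaced by ε'_j for all j ≤ 0. Then there exists a constant C such that ‖V_k − V_k^*‖_p ≤ C Σ_{i=1}^∞ ‖ε_0‖_p^i Σ_{l≥k} A_{l,i}, whenever the right-hand side is finite. -/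
/-!
Expand `V_k - V_k^*` as a single series over kernel indices. A term whose indices all lie
below `k` only sees innovations at positive times, which the coupling leaves untouched, so it
cancels. Every other term of either process is, by independence, `a(j)` times a product of
distinct i.i.d. factors, hence has `L^p` norm `|a(j)| ‖ε_0‖_p^i`, and a tuple reaching `k`
is counted at least once in `Σ_{l ≥ k} A_{l,i}`; Minkowski's inequality for series then gives
the bound with `C = 2`. The same estimate makes the tails of both series almost surely
absolutely summable, while their heads are finite sums, which justifies the termwise expansion.
-/

open MeasureTheory ProbabilityTheory
open scoped ENNReal NNReal

noncomputable section

/-- The Volterra process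
`V_k = Σ_{i≥1} Σ_{0≤j_1<…<j_i} a(j_1,…,j_i) ε_{k-j_1} ⋯ ε_{k-j_i}` (here the kernel of
order `i+1` is `a i`, indexed by strictly increasing tuples `j : Fin (i+1) → ℕ`). -/
def volterra {Ω : Type*} (a : (i : ℕ) → (Fin (i + 1) → ℕ) → ℝ) (ε : ℤ → Ω → ℝ)
    (k : ℤ) (ω : Ω) : ℝ :=
  ∑' (i : ℕ) (j : Fin (i + 1) → ℕ),
    if StrictMono j then a i j * ∏ t, ε (k - j t) ω else 0

/-- The coupled version `V_k^*`: every `ε_m` with `m ≤ 0` is replaced by `ε'_m`. -/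
def volterraStar {Ω : Type*} (a : (i : ℕ) → (Fin (i + 1) → ℕ) → ℝ) (ε ε' : ℤ → Ω → ℝ)
    (k : ℤ) (ω : Ω) : ℝ :=
  ∑' (i : ℕ) (j : Fin (i + 1) → ℕ),
    if StrictMono j then
      a i j * ∏ t, (if k - (j t : ℤ) ≤ 0 then ε' (k - j t) ω else ε (k - j t) ω) else 0

/-- `A_{k,i}`: the sum of `|a(j_1,…,j_i)|` over all strictly increasing tuples containing `k`. -/
def Avol (a : (i : ℕ) → (Fin (i + 1) → ℕ) → ℝ) (k i : ℕ) : ℝ≥0∞ :=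
  ∑' j : Fin (i + 1) → ℕ,
    if StrictMono j ∧ ∃ t, j t = k then ENNReal.ofReal |a i j| else 0

open Filter Function

namespace MeasureTheory

theorem eLpNorm_tsum_le {Ω E κ : Type*} [MeasurableSpace Ω] {μ : Measure Ω}
    [NormedAddCommGroup E] [Countable κ] {q : ℝ≥0∞} (hq : 1 ≤ q) {f : κ → Ω → E}
    (hf : ∀ x, AEStronglyMeasurable (f x) μ) (hsum : ∀ᵐ ω ∂μ, Summable (f · ω)) :
    eLpNorm (fun ω => ∑' x, f x ω) q μ ≤ ∑' x, eLpNorm (f x) q μ :=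
  Lp.eLpNorm_le_of_ae_tendsto (u := atTop) (f := fun s ω => ∑ x ∈ s, f x ω)
    (Eventually.of_forall fun s => by
      simpa only [Finset.sum_fn] using
        (eLpNorm_sum_le (fun x _ => hf x) hq).trans (ENNReal.sum_le_tsum s))
    (fun s => Finset.aestronglyMeasurable_fun_sum s fun x _ => hf x)
    (hsum.mono fun _ h => h.hasSum)

end MeasureTheory

namespace ProbabilityTheory

variable {Ω κ : Type*} [MeasurableSpace Ω] {μ : Measure Ω} {ξ : κ → Ω → ℝ} {q : ℝ≥0∞}

theorem iIndepFun.eLpNorm_finset_prod (hξ : iIndepFun ξ μ) (hm : ∀ i, Measurable (ξ i))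
    (hq0 : q ≠ 0) (hqt : q ≠ ∞) (s : Finset κ) :
    eLpNorm (fun ω => ∏ i ∈ s, ξ i ω) q μ = ∏ i ∈ s, eLpNorm (ξ i) q μ := by
  have hr : 0 ≤ q.toReal := ENNReal.toReal_nonneg
  have hpow : Measurable fun x : ℝ => ‖x‖ₑ ^ q.toReal :=
    (ENNReal.continuous_rpow_const.comp continuous_enorm).measurable
  have hprod (ω : Ω) : ‖∏ i ∈ s, ξ i ω‖ₑ ^ q.toReal = ∏ i ∈ s, ‖ξ i ω‖ₑ ^ q.toReal := by
    simp only [enorm_eq_nnnorm, nnnorm_prod, ENNReal.ofNNReal_finsetProd,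
      ENNReal.prod_rpow_of_nonneg hr]
  simp only [eLpNorm_eq_lintegral_rpow_enorm_toReal hq0 hqt, hprod]
  rw [lintegral_prod_eq_prod_lintegral_of_indepFun s (fun i ω => ‖ξ i ω‖ₑ ^ q.toReal)
    (hξ.comp (fun _ x => ‖x‖ₑ ^ q.toReal) fun _ => hpow) fun i => hpow.comp (hm i),
    ENNReal.prod_rpow_of_nonneg (by positivity)]

theorem iIndepFun.eLpNorm_prod_of_identDistrib (hξ : iIndepFun ξ μ) (hm : ∀ i, Measurable (ξ i))
    {i₀ : κ} (hid : ∀ i, IdentDistrib (ξ i) (ξ i₀) μ μ) (hq0 : q ≠ 0) (hqt : q ≠ ∞) {n : ℕ}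
    {m : Fin n → κ} (hinj : Injective m) :
    eLpNorm (fun ω => ∏ t, ξ (m t) ω) q μ = eLpNorm (ξ i₀) q μ ^ n := by
  rw [(hξ.precomp hinj).eLpNorm_finset_prod (fun t => hm (m t)) hq0 hqt]
  simp [(hid _).eLpNorm_eq]

end ProbabilityTheory

abbrev VolterraIndex : Type := Σ i : ℕ, Fin (i + 1) → ℕ

section Volterra

variable {Ω : Type*} (a : (i : ℕ) → (Fin (i + 1) → ℕ) → ℝ)

def volterraTerm (η : ℤ → Ω → ℝ) (k : ℤ) (x : VolterraIndex) (ω : Ω) : ℝ :=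
  if StrictMono x.2 then a x.1 x.2 * ∏ t, η (k - x.2 t) ω else 0

theorem volterra_eq_tsum_volterraTerm {η : ℤ → Ω → ℝ} {k : ℤ} {ω : Ω}
    (h : Summable fun x => volterraTerm a η k x ω) :
    volterra a η k ω = ∑' x, volterraTerm a η k x ω :=
  h.tsum_sigma.symm

def couplingIndex (m : ℤ) : ℤ ⊕ ℤ := if m ≤ 0 then .inr m else .inl m

theorem couplingIndex_injective : Injective couplingIndex :=
  LeftInverse.injective (g := Sum.elim id id) fun m => by
    unfold couplingIndex; split_ifs <;> rfl

theorem volterraStar_eq_volterra (ε ε' : ℤ → Ω → ℝ) :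
    volterraStar a ε ε' = volterra a (fun m => Sum.elim ε ε' (couplingIndex m)) := by
  funext k ω
  unfold volterraStar volterra couplingIndex
  refine tsum_congr fun i => tsum_congr fun j => if_congr Iff.rfl ?_ rfl
  refine congrArg _ (Finset.prod_congr rfl fun t _ => ?_)
  dsimp only
  split_ifs <;> rfl

theorem volterraTerm_congr {η η' : ℤ → Ω → ℝ} (h : ∀ m, 0 < m → η m = η' m) {k : ℕ}
    {x : VolterraIndex} (hx : ∀ t, x.2 t < k) :
    volterraTerm a η k x = volterraTerm a η' k x := by
  funext ω
  refine if_congr Iff.rfl (congrArg _ (Finset.prod_congr rfl fun t _ => ?_)) rfl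
  exact congrFun (h _ (by have := hx t; omega)) ω

theorem finite_setOf_strictMono_forall_lt (k : ℕ) :
    {x : VolterraIndex | StrictMono x.2 ∧ ∀ t, x.2 t < k}.Finite := by
  refine ((Finset.range k).sigma fun i => Fintype.piFinset fun _ => Finset.range k)
    |>.finite_toSet.subset ?_
  rintro ⟨i, j⟩ ⟨hj, hlt⟩
  have hcard := Fintype.card_le_of_injective (fun t => (⟨j t, hlt t⟩ : Fin k))
    fun t s hts => hj.injective (Fin.mk.inj_iff.mp hts)
  simp only [Fintype.card_fin] at hcard
  simpa [Fintype.mem_piFinset] using ⟨by omega, hlt⟩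

def tailWeight (M : ℝ≥0∞) (k : ℕ) (x : VolterraIndex) : ℝ≥0∞ :=
  if StrictMono x.2 ∧ ∃ t, k ≤ x.2 t then ENNReal.ofReal |a x.1 x.2| * M ^ (x.1 + 1) else 0

theorem tsum_tailWeight_le (M : ℝ≥0∞) (k : ℕ) :
    ∑' x, tailWeight a M k x ≤ ∑' i, M ^ (i + 1) * ∑' l, Avol a (k + l) i := by
  rw [ENNReal.tsum_sigma']
  refine ENNReal.tsum_le_tsum fun i => ?_
  simp only [Avol, ← ENNReal.tsum_mul_left]
  rw [ENNReal.tsum_comm]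
  refine ENNReal.tsum_le_tsum fun j => ?_
  unfold tailWeight
  split_ifs with h
  · obtain ⟨hj, t, ht : k ≤ j t⟩ := h
    refine le_trans (le_of_eq ?_) (ENNReal.le_tsum (j t - k))
    rw [if_pos ⟨hj, t, by omega⟩, mul_comm]
  · exact zero_le

end Volterra

section IIDDriven

variable {Ω κ : Type*} [MeasurableSpace Ω] {μ : Measure Ω} {ξ : κ → Ω → ℝ} {i₀ : κ}
  {ι ι' : ℤ → κ} {q : ℝ≥0∞} (a : (i : ℕ) → (Fin (i + 1) → ℕ) → ℝ)

theorem measurable_volterraTerm {η : ℤ → Ω → ℝ} (hη : ∀ m, Measurable (η m)) (k : ℤ)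
    (x : VolterraIndex) : Measurable (volterraTerm a η k x) := by
  unfold volterraTerm
  split_ifs
  · exact (Finset.measurable_prod _ fun t _ => hη _).const_mul _
  · exact measurable_const

variable (hξ : iIndepFun ξ μ) (hm : ∀ i, Measurable (ξ i))
  (hid : ∀ i, IdentDistrib (ξ i) (ξ i₀) μ μ)
include hξ hm hid

theorem eLpNorm_volterraTerm (hι : Injective ι) (hq0 : q ≠ 0) (hqt : q ≠ ∞) (k : ℤ)
    (x : VolterraIndex) :
    eLpNorm (volterraTerm a (fun m => ξ (ι m)) k x) q μ =
      if StrictMono x.2 then ENNReal.ofReal |a x.1 x.2| * eLpNorm (ξ i₀) q μ ^ (x.1 + 1)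
      else 0 := by
  unfold volterraTerm
  split_ifs with hx
  · have hinj : Injective fun t => ι (k - x.2 t) :=
      hι.comp <| sub_right_injective.comp <| Nat.cast_injective.comp hx.injective
    rw [show (fun ω => a x.1 x.2 * ∏ t, ξ (ι (k - x.2 t)) ω) =
        a x.1 x.2 • fun ω => ∏ t, ξ (ι (k - x.2 t)) ω from rfl, eLpNorm_const_smul,
      hξ.eLpNorm_prod_of_identDistrib hm hid hq0 hqt hinj, Real.enorm_eq_ofReal_abs]
  · simp

theorem eLpNorm_volterraTerm_sub_le (hι : Injective ι) (hι' : Injective ι')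
    (hagree : ∀ m, 0 < m → ι m = ι' m) (hq : 1 ≤ q) (hqt : q ≠ ∞) (k : ℕ) (x : VolterraIndex) :
    eLpNorm (fun ω => volterraTerm a (fun m => ξ (ι m)) k x ω -
        volterraTerm a (fun m => ξ (ι' m)) k x ω) q μ
      ≤ 2 * tailWeight a (eLpNorm (ξ i₀) q μ) k x := by
  have hq0 : q ≠ 0 := (zero_lt_one.trans_le hq).ne'
  by_cases hx : ∃ t, k ≤ x.2 t
  · calc _ ≤ eLpNorm (volterraTerm a (fun m => ξ (ι m)) k x) q μ +
          eLpNorm (volterraTerm a (fun m => ξ (ι' m)) k x) q μ :=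
          eLpNorm_sub_le (measurable_volterraTerm a (fun m => hm _) k x).aestronglyMeasurable
            (measurable_volterraTerm a (fun m => hm _) k x).aestronglyMeasurable hq
      _ = 2 * tailWeight a (eLpNorm (ξ i₀) q μ) k x := by
          rw [eLpNorm_volterraTerm a hξ hm hid hι hq0 hqt,
            eLpNorm_volterraTerm a hξ hm hid hι' hq0 hqt, tailWeight, two_mul]
          split_ifs <;> simp_all
  · push Not at hx
    rw [volterraTerm_congr a (fun m hm => congrArg ξ (hagree m hm)) hx]
    simp

theorem ae_summable_volterraTerm (hι : Injective ι) (hq : 1 ≤ q) (hqt : q ≠ ∞) (k : ℕ)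
    (hw : ∑' x, tailWeight a (eLpNorm (ξ i₀) q μ) k x ≠ ∞) :
    ∀ᵐ ω ∂μ, Summable fun x => volterraTerm a (fun m => ξ (ι m)) k x ω := by
  set V := volterraTerm a (fun m => ξ (ι m)) k
  have hV : ∀ x, Measurable (V x) := measurable_volterraTerm a (fun m => hm _) k
  let tail : VolterraIndex → Ω → ℝ := fun x => if ∃ t, k ≤ x.2 t then V x else 0
  have htail : ∀ᵐ ω ∂μ, Summable fun x => ‖tail x ω‖ := by
    refine summable_norm_of_tsum_eLpNorm_ne_top hq
      (fun x => by
        unfold tail; split_ifs; exacts [(hV x).aestronglyMeasurable, aestronglyMeasurable_const])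
      (ne_top_of_le_ne_top hw ?_)
    refine ENNReal.tsum_le_tsum fun x => ?_
    unfold tail tailWeight
    split_ifs <;> simp_all [V, eLpNorm_volterraTerm a hξ hm hid hι
      (zero_lt_one.trans_le hq).ne' hqt]
  have hhead (ω : Ω) : Summable fun x => V x ω - tail x ω := by
    refine summable_of_hasFiniteSupport <| (finite_setOf_strictMono_forall_lt k).subset ?_
    intro x hx
    by_cases hr : ∃ t, k ≤ x.2 t
    · simp [tail, hr] at hx
    by_cases hj : StrictMono x.2
    · exact ⟨hj, by simpa using hr⟩
    · simp [tail, hr, V, volterraTerm, hj] at hx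
  filter_upwards [htail] with ω hω
  simpa using (hhead ω).add hω.of_norm

theorem eLpNorm_volterra_sub_le (hι : Injective ι) (hι' : Injective ι')
    (hagree : ∀ m, 0 < m → ι m = ι' m) (hq : 1 ≤ q) (hqt : q ≠ ∞) (k : ℕ) :
    eLpNorm (fun ω => volterra a (fun m => ξ (ι m)) k ω - volterra a (fun m => ξ (ι' m)) k ω)
        q μ ≤ 2 * ∑' x, tailWeight a (eLpNorm (ξ i₀) q μ) k x := by
  by_cases hw : ∑' x, tailWeight a (eLpNorm (ξ i₀) q μ) k x = ∞
  · simp [hw]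
  set V := volterraTerm a (fun m => ξ (ι m)) k
  set V' := volterraTerm a (fun m => ξ (ι' m)) k
  have hsum := ae_summable_volterraTerm a hξ hm hid hι hq hqt k hw
  have hsum' := ae_summable_volterraTerm a hξ hm hid hι' hq hqt k hw
  calc _ = eLpNorm (fun ω => ∑' x, (V x ω - V' x ω)) q μ := by
        refine eLpNorm_congr_ae ?_
        filter_upwards [hsum, hsum'] with ω h h'
        rw [volterra_eq_tsum_volterraTerm a h, volterra_eq_tsum_volterraTerm a h', h.tsum_sub h']
    _ ≤ ∑' x, eLpNorm (fun ω => V x ω - V' x ω) q μ := by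
        refine eLpNorm_tsum_le hq (fun x => ?_) ?_
        · exact ((measurable_volterraTerm a (fun m => hm _) k x).sub
            (measurable_volterraTerm a (fun m => hm _) k x)).aestronglyMeasurable
        · filter_upwards [hsum, hsum'] with ω h h' using h.sub h'
    _ ≤ ∑' x, 2 * tailWeight a (eLpNorm (ξ i₀) q μ) k x :=
        ENNReal.tsum_le_tsum fun x =>
          eLpNorm_volterraTerm_sub_le a hξ hm hid hι hι' hagree hq hqt k x
    _ = _ := ENNReal.tsum_mul_left

end IIDDriven

theorem volterra_coupling_bound_general
    {Ω : Type*} [MeasurableSpace Ω] (μ : Measure Ω)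
    (ε ε' : ℤ → Ω → ℝ) (hiid : IIDPair μ ε ε') (p : ℝ) (hp : 3 < p)
    (a : (i : ℕ) → (Fin (i + 1) → ℕ) → ℝ) :
    ∃ C : ℝ≥0∞, C ≠ ⊤ ∧ ∀ k : ℕ,
      eLpNorm (fun ω => volterra a ε k ω - volterraStar a ε ε' k ω) (ENNReal.ofReal p) μ
        ≤ C * ∑' i : ℕ,
            (eLpNorm (ε 0) (ENNReal.ofReal p) μ) ^ (i + 1) * ∑' l : ℕ, Avol a (k + l) i := by
  obtain ⟨hmε, hmε', hindep, hid⟩ := hiid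
  have hq : 1 ≤ ENNReal.ofReal p := ENNReal.one_le_ofReal.mpr (by linarith)
  refine ⟨2, ENNReal.ofNat_ne_top, fun k => ?_⟩
  rw [volterraStar_eq_volterra]
  calc _ ≤ 2 * ∑' x, tailWeight a (eLpNorm (ε 0) (ENNReal.ofReal p) μ) k x :=
        eLpNorm_volterra_sub_le a (ξ := Sum.elim ε ε') (i₀ := .inl 0) hindep
          (Sum.forall.mpr ⟨hmε, hmε'⟩) (fun j => hid j _) Sum.inl_injective
          couplingIndex_injective (fun m hm => by simp [couplingIndex, hm.not_ge]) hq
          ENNReal.ofReal_ne_top k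
    _ ≤ _ := mul_le_mul_right (tsum_tailWeight_le a _ k) 2

/-- `‖V_k − V_k^*‖_p ≤ C Σ_i ‖ε_0‖_p^i Σ_{l≥k} A_{l,i}`. -/
theorem volterra_coupling_bound
    {Ω : Type*} [MeasurableSpace Ω] (μ : Measure Ω) [IsProbabilityMeasure μ]
    (ε ε' : ℤ → Ω → ℝ) (hiid : IIDPair μ ε ε') (p : ℝ) (hp : 3 < p)
    (hmom : eLpNorm (ε 0) (ENNReal.ofReal p) μ < ⊤)
    (a : (i : ℕ) → (Fin (i + 1) → ℕ) → ℝ) :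
    ∃ C : ℝ≥0∞, C ≠ ⊤ ∧ ∀ k : ℕ,
      eLpNorm (fun ω => volterra a ε k ω - volterraStar a ε ε' k ω) (ENNReal.ofReal p) μ
        ≤ C * ∑' i : ℕ,
            (eLpNorm (ε 0) (ENNReal.ofReal p) μ) ^ (i + 1) * ∑' l : ℕ, Avol a (k + l) i :=
  volterra_coupling_bound_general μ ε ε' hiid p hp a

end
end
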